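/- The embedding m from λJ into λJm strictly simulates reduction and preserves typability: if t → t' in λJ then m(t) →⁺ m(t') in λJm, and if Γ ⊢ t:A in λJ then Γ ⊢ m(t):A in λJm. -/

import Mathlib

-- Simple types and contexts.
inductive Ty : Type
  | tv : ℕ → Ty
  | arr : Ty → Ty → Ty
  deriving DecidableEq

def Ctx := ℕ → Option Ty

def Ctx.ext (Γ : Ctx) (x : ℕ) (A : Ty) : Ctx :=
  fun y => if y = x then some A else Γ y

-- The λJ-calculus: terms with generalised application t(u, x.v).
inductive JTm : Type
  | var : ℕ → JTm
  | lam : ℕ → JTm → JTm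
  | gapp : JTm → JTm → ℕ → JTm → JTm
  deriving DecidableEq

def jsubst (t : JTm) (x : ℕ) : JTm → JTm
  | .var y => if x = y then t else .var y
  | .lam y u => .lam y (jsubst t x u)
  | .gapp u u' y v => .gapp (jsubst t x u) (jsubst t x u') y (jsubst t x v)

-- (u,x.v) @ (u',y.v') : computed by recursion on v, giving the new body.
def jappend (v : JTm) (u' : JTm) (y : ℕ) (v' : JTm) : JTm :=
  match v with
  | .var z => .gapp (.var z) u' y v'
  | .lam z t => .gapp (.lam z t) u' y v'
  | .gapp t u'' x'' v'' => .gapp t u'' x'' (jappend v'' u' y v')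

inductive JStep : JTm → JTm → Prop
  | beta (x : ℕ) (t u : JTm) (y : ℕ) (v : JTm) :
      JStep (.gapp (.lam x t) u y v) (jsubst (jsubst u x t) y v)
  | pi (t u : JTm) (x : ℕ) (v : JTm) (u' : JTm) (y : ℕ) (v' : JTm) :
      JStep (.gapp (.gapp t u x v) u' y v') (.gapp t u x (jappend v u' y v'))
  | lam {t t' : JTm} (x : ℕ) : JStep t t' → JStep (.lam x t) (.lam x t')
  | gapp₁ {t t' : JTm} (u : JTm) (x : ℕ) (v : JTm) :
      JStep t t' → JStep (.gapp t u x v) (.gapp t' u x v)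
  | gapp₂ {u u' : JTm} (t : JTm) (x : ℕ) (v : JTm) :
      JStep u u' → JStep (.gapp t u x v) (.gapp t u' x v)
  | gapp₃ {v v' : JTm} (t u : JTm) (x : ℕ) :
      JStep v v' → JStep (.gapp t u x v) (.gapp t u x v')

inductive JTy : Ctx → JTm → Ty → Prop
  | ax {Γ : Ctx} {x : ℕ} {A : Ty} : Γ x = some A → JTy Γ (.var x) A
  | intro {Γ : Ctx} {x : ℕ} {t : JTm} {A B : Ty} :
      JTy (Γ.ext x A) t B → JTy Γ (.lam x t) (.arr A B)
  | gapp {Γ : Ctx} {t u : JTm} {x : ℕ} {v : JTm} {A B C : Ty} :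
      JTy Γ t (.arr A B) → JTy Γ u A → JTy (Γ.ext x B) v C →
      JTy Γ (.gapp t u x v) C

-- The λJm-calculus: generalised multiary applications t(u,l).
mutual
inductive JmTm : Type
  | var : ℕ → JmTm
  | lam : ℕ → JmTm → JmTm
  | app : JmTm → JmTm → JmCo → JmTm
  deriving DecidableEq
inductive JmCo : Type
  | cons : JmTm → JmCo → JmCo
  | sel : ℕ → JmTm → JmCo
  deriving DecidableEq
end

mutual
def jmsubstTm (t : JmTm) (x : ℕ) : JmTm → JmTm
  | .var y => if x = y then t else .var y
  | .lam y u => .lam y (jmsubstTm t x u)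
  | .app u u' l => .app (jmsubstTm t x u) (jmsubstTm t x u') (jmsubstCo t x l)
def jmsubstCo (t : JmTm) (x : ℕ) : JmCo → JmCo
  | .cons u l => .cons (jmsubstTm t x u) (jmsubstCo t x l)
  | .sel y v => .sel y (jmsubstTm t x v)
end

mutual
def jmfreeTm : JmTm → Finset ℕ
  | .var x => {x}
  | .lam x t => jmfreeTm t \ {x}
  | .app t u l => jmfreeTm t ∪ jmfreeTm u ∪ jmfreeCo l
def jmfreeCo : JmCo → Finset ℕ
  | .cons u l => jmfreeTm u ∪ jmfreeCo l
  | .sel x v => jmfreeTm v \ {x}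
end

-- l @ (u',l') in λJm.
def jmappend : JmCo → JmTm → JmCo → JmCo
  | .cons u l, u', l' => .cons u (jmappend l u' l')
  | .sel x (.var y), u', l' => .sel x (.app (.var y) u' l')
  | .sel x (.lam y t), u', l' => .sel x (.app (.lam y t) u' l')
  | .sel x (.app t u l), u', l' => .sel x (.app t u (jmappend l u' l'))

mutual
inductive JmStepTm : JmTm → JmTm → Prop
  | beta₁ (x : ℕ) (t u : JmTm) (y : ℕ) (v : JmTm) :
      JmStepTm (.app (.lam x t) u (.sel y v)) (jmsubstTm (jmsubstTm u x t) y v)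
  | beta₂ (x : ℕ) (t u v : JmTm) (l : JmCo) :
      JmStepTm (.app (.lam x t) u (.cons v l)) (.app (jmsubstTm u x t) v l)
  | pi (t u : JmTm) (l : JmCo) (u' : JmTm) (l' : JmCo) :
      JmStepTm (.app (.app t u l) u' l') (.app t u (jmappend l u' l'))
  | lam {t t' : JmTm} (x : ℕ) : JmStepTm t t' → JmStepTm (.lam x t) (.lam x t')
  | app₁ {t t' : JmTm} (u : JmTm) (l : JmCo) :
      JmStepTm t t' → JmStepTm (.app t u l) (.app t' u l)
  | app₂ {u u' : JmTm} (t : JmTm) (l : JmCo) :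
      JmStepTm u u' → JmStepTm (.app t u l) (.app t u' l)
  | app₃ {l l' : JmCo} (t u : JmTm) :
      JmStepCo l l' → JmStepTm (.app t u l) (.app t u l')
inductive JmStepCo : JmCo → JmCo → Prop
  | mu {x : ℕ} {u : JmTm} {l : JmCo} : x ∉ jmfreeTm u → x ∉ jmfreeCo l →
      JmStepCo (.sel x (.app (.var x) u l)) (.cons u l)
  | consL {u u' : JmTm} (l : JmCo) : JmStepTm u u' → JmStepCo (.cons u l) (.cons u' l)
  | consR {l l' : JmCo} (u : JmTm) : JmStepCo l l' → JmStepCo (.cons u l) (.cons u l')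
  | sel {v v' : JmTm} (x : ℕ) : JmStepTm v v' → JmStepCo (.sel x v) (.sel x v')
end

mutual
inductive JmTyTm : Ctx → JmTm → Ty → Prop
  | ax {Γ : Ctx} {x : ℕ} {A : Ty} : Γ x = some A → JmTyTm Γ (.var x) A
  | intro {Γ : Ctx} {x : ℕ} {t : JmTm} {A B : Ty} :
      JmTyTm (Γ.ext x A) t B → JmTyTm Γ (.lam x t) (.arr A B)
  | gmapp {Γ : Ctx} {t u : JmTm} {l : JmCo} {A B C : Ty} :
      JmTyTm Γ t (.arr A B) → JmTyTm Γ u A → JmTyCo Γ l B C →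
      JmTyTm Γ (.app t u l) C
inductive JmTyCo : Ctx → JmCo → Ty → Ty → Prop
  | lintro {Γ : Ctx} {u : JmTm} {l : JmCo} {A B C : Ty} :
      JmTyTm Γ u A → JmTyCo Γ l B C → JmTyCo Γ (.cons u l) (.arr A B) C
  | sel {Γ : Ctx} {x : ℕ} {v : JmTm} {A B : Ty} :
      JmTyTm (Γ.ext x A) v B → JmTyCo Γ (.sel x v) A B
end

-- The embedding m : λJ → λJm.
def mEmb : JTm → JmTm
  | .var x => .var x
  | .lam x t => .lam x (mEmb t)
  | .gapp t u x v => .app (mEmb t) (mEmb u) (.sel x (mEmb v))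

theorem mEmb_jsubst (t : JTm) (x : ℕ) (u : JTm) :
    mEmb (jsubst t x u) = jmsubstTm (mEmb t) x (mEmb u) := by
  induction u with
  | var y => by_cases h : x = y <;> simp [jsubst, mEmb, jmsubstTm, h]
  | lam y u ih => simp [jsubst, mEmb, jmsubstTm, ih]
  | gapp a b y c iha ihb ihc => simp [jsubst, mEmb, jmsubstTm, jmsubstCo, iha, ihb, ihc]

theorem mEmb_jappend (v u' : JTm) (x y : ℕ) (v' : JTm) :
    jmappend (.sel x (mEmb v)) (mEmb u') (.sel y (mEmb v')) =
      .sel x (mEmb (jappend v u' y v')) := by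
  induction v generalizing x with
  | var z => simp [mEmb, jappend, jmappend]
  | lam z t => simp [mEmb, jappend, jmappend]
  | gapp t u x' w _ _ ih => simp [mEmb, jappend, jmappend, ih]

theorem JStep.mEmb_step {t t' : JTm} (h : JStep t t') : JmStepTm (mEmb t) (mEmb t') := by
  induction h with
  | beta x t u y v =>
    rw [mEmb_jsubst, mEmb_jsubst]
    exact .beta₁ x (mEmb t) (mEmb u) y (mEmb v)
  | pi t u x v u' y v' =>
    simpa only [mEmb, mEmb_jappend] using
      JmStepTm.pi (mEmb t) (mEmb u) (.sel x (mEmb v)) (mEmb u') (.sel y (mEmb v'))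
  | lam x _ ih => exact .lam x ih
  | gapp₁ u x v _ ih => exact .app₁ _ _ ih
  | gapp₂ t x v _ ih => exact .app₂ _ _ ih
  | gapp₃ t u x _ ih => exact .app₃ _ _ (.sel x ih)

theorem JTy.mEmb_ty {Γ : Ctx} {t : JTm} {A : Ty} (h : JTy Γ t A) : JmTyTm Γ (mEmb t) A := by
  induction h with
  | ax h => exact .ax h
  | intro _ ih => exact .intro ih
  | gapp _ _ _ iht ihu ihv => exact .gmapp iht ihu (.sel ihv)

theorem m_strictly_simulates_and_preserves_typing :
    (∀ t t' : JTm, JStep t t' → Relation.TransGen JmStepTm (mEmb t) (mEmb t')) ∧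
    (∀ (Γ : Ctx) (t : JTm) (A : Ty), JTy Γ t A → JmTyTm Γ (mEmb t) A) :=
  ⟨fun _ _ h => .single h.mEmb_step, fun _ _ _ h => h.mEmb_ty⟩
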